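/- Let D be a k-hyperarc-connected directed hypergraph with fixed vertex r. Let R ⊆ V−r with d⁻(R) = k be such that R contains a set T with d⁺(T) = k, and R is inclusion-wise minimal with this property (among sets in V−r that are tight in one direction and contain a tight set in the other direction). Let S ⊆ R be inclusion-wise minimal with d⁻(S) = k, T ⊆ R inclusion-wise minimal with d⁺(T) = k, s ∈ S a safe source, and t ∈ T a safe sink. Then every X ⊆ V−r with s ∈ X and t ∉ X satisfies d⁺(X) ≥ k+1, and every X ⊆ V−r with t ∈ X and s ∉ X satisfies d⁻(X) ≥ k+1. -/
import Mathlib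


/-- In-degree of a vertex set in a directed hypergraph. -/
def dIn {V : Type*} [DecidableEq V] (A : Multiset (Finset V × V)) (X : Finset V) : ℕ :=
  Multiset.countP (fun a => a.2 ∈ X ∧ (a.1 \ X).Nonempty) A

/-- Out-degree of a vertex set in a directed hypergraph. -/
def dOut {V : Type*} [DecidableEq V] (A : Multiset (Finset V × V)) (X : Finset V) : ℕ :=
  Multiset.countP (fun a => a.2 ∉ X ∧ (a.1 ∩ X).Nonempty) A

/-- Degree of a vertex set in an undirected hypergraph. -/
def degH {V : Type*} [DecidableEq V] (E : Multiset (Finset V)) (X : Finset V) : ℕ :=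
  Multiset.countP (fun Z => (Z ∩ X).Nonempty ∧ (Z \ X).Nonempty) E

/-- `P` is a partition of the vertex set into nonempty parts. -/
def IsPartition {V : Type*} [Fintype V] [DecidableEq V] (P : Finset (Finset V)) : Prop :=
  (∀ X ∈ P, X.Nonempty) ∧ (P : Set (Finset V)).PairwiseDisjoint id ∧
    P.biUnion id = Finset.univ

/-- Number of hyperedges intersecting at least two members of `P`. -/
def ePart {V : Type*} [DecidableEq V] (E : Multiset (Finset V)) (P : Finset (Finset V)) : ℕ :=
  Multiset.countP (fun Z => 1 < (P.filter (fun X => (Z ∩ X).Nonempty)).card) E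

/-- `A` is an orientation of the hypergraph `E`: each hyperedge `X` gets a head `v ∈ X`,
producing the hyperarc `(X − v, v)`. -/
def IsOrientation {V : Type*} [DecidableEq V] (E : Multiset (Finset V))
    (A : Multiset (Finset V × V)) : Prop :=
  A.map (fun a => insert a.2 a.1) = E ∧ ∀ a ∈ A, a.2 ∉ a.1

/-- `L` is an `(s,t)`-hyperpath in the directed hypergraph `A`. -/
def IsHyperpath {V : Type*} [DecidableEq V] (A : Multiset (Finset V × V)) (s t : V)
    (L : List (Finset V × V)) : Prop :=
  L ≠ [] ∧ (∀ a ∈ L, a ∈ A) ∧ (∀ a ∈ L.head?, s ∈ a.1) ∧ (∀ a ∈ L.getLast?, t = a.2) ∧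
    L.Chain' (fun a b => a.2 ∈ b.1) ∧ (L.map Prod.snd).Nodup


lemma dIn_submod {V : Type*} [DecidableEq V] (A : Multiset (Finset V × V)) (X Y : Finset V) :
    dIn A (X ∪ Y) + dIn A (X ∩ Y) ≤ dIn A X + dIn A Y := by
  have key : ∀ a : Finset V × V,
      (if a.2 ∈ X ∪ Y ∧ (a.1 \ (X ∪ Y)).Nonempty then (1:ℕ) else 0) +
      (if a.2 ∈ X ∩ Y ∧ (a.1 \ (X ∩ Y)).Nonempty then 1 else 0) ≤
      (if a.2 ∈ X ∧ (a.1 \ X).Nonempty then 1 else 0) +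
      (if a.2 ∈ Y ∧ (a.1 \ Y).Nonempty then 1 else 0) := by
    intro a
    have h1 : a.1 \ (X ∪ Y) ⊆ a.1 \ X := Finset.sdiff_subset_sdiff le_rfl Finset.subset_union_left
    have h2 : a.1 \ (X ∪ Y) ⊆ a.1 \ Y := Finset.sdiff_subset_sdiff le_rfl Finset.subset_union_right
    have h3 : (a.1 \ (X ∩ Y)).Nonempty → (a.1 \ X).Nonempty ∨ (a.1 \ Y).Nonempty := by
      rintro ⟨u, hu⟩
      simp only [Finset.mem_sdiff, Finset.mem_inter, not_and] at hu
      by_cases hX : u ∈ X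
      · exact Or.inr ⟨u, Finset.mem_sdiff.2 ⟨hu.1, hu.2 hX⟩⟩
      · exact Or.inl ⟨u, Finset.mem_sdiff.2 ⟨hu.1, hX⟩⟩
    by_cases pU : a.2 ∈ X ∪ Y ∧ (a.1 \ (X ∪ Y)).Nonempty
    · by_cases pI : a.2 ∈ X ∩ Y ∧ (a.1 \ (X ∩ Y)).Nonempty
      · have hX : a.2 ∈ X ∧ (a.1 \ X).Nonempty :=
          ⟨(Finset.mem_inter.1 pI.1).1, pU.2.mono h1⟩
        have hY : a.2 ∈ Y ∧ (a.1 \ Y).Nonempty :=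
          ⟨(Finset.mem_inter.1 pI.1).2, pU.2.mono h2⟩
        rw [if_pos pU, if_pos pI, if_pos hX, if_pos hY]
      · rcases Finset.mem_union.1 pU.1 with h | h
        · have hX : a.2 ∈ X ∧ (a.1 \ X).Nonempty := ⟨h, pU.2.mono h1⟩
          rw [if_pos pU, if_neg pI, if_pos hX]; split_ifs <;> omega
        · have hY : a.2 ∈ Y ∧ (a.1 \ Y).Nonempty := ⟨h, pU.2.mono h2⟩
          rw [if_pos pU, if_neg pI, if_pos hY]; split_ifs <;> omega
    · by_cases pI : a.2 ∈ X ∩ Y ∧ (a.1 \ (X ∩ Y)).Nonempty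
      · rcases h3 pI.2 with h | h
        · have hX : a.2 ∈ X ∧ (a.1 \ X).Nonempty := ⟨(Finset.mem_inter.1 pI.1).1, h⟩
          rw [if_neg pU, if_pos pI, if_pos hX]; split_ifs <;> omega
        · have hY : a.2 ∈ Y ∧ (a.1 \ Y).Nonempty := ⟨(Finset.mem_inter.1 pI.1).2, h⟩
          rw [if_neg pU, if_pos pI, if_pos hY]; split_ifs <;> omega
      · rw [if_neg pU, if_neg pI]; omega
  unfold dIn
  induction A using Multiset.induction_on with
  | empty => simp
  | cons a s ih =>
    simp only [Multiset.countP_cons]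
    have := key a
    omega

lemma dOut_eq_dIn_compl {V : Type*} [Fintype V] [DecidableEq V] (A : Multiset (Finset V × V))
    (X : Finset V) : dOut A X = dIn A (Finset.univ \ X) := by
  unfold dIn dOut
  apply Multiset.countP_congr rfl
  intro a _
  rw [eq_iff_iff]
  constructor
  · rintro ⟨h1, h2⟩
    refine ⟨by simp [h1], ?_⟩
    obtain ⟨u, hu⟩ := h2
    simp only [Finset.mem_inter] at hu
    exact ⟨u, by simp [hu.1, hu.2]⟩
  · rintro ⟨h1, h2⟩
    refine ⟨by simpa using h1, ?_⟩
    obtain ⟨u, hu⟩ := h2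
    simp only [Finset.mem_sdiff, Finset.mem_univ, not_and, not_not, true_and] at hu
    exact ⟨u, Finset.mem_inter.2 ⟨hu.1, by simpa using hu.2⟩⟩

/-- From a safe source in `S` to a safe sink in `T`, both inside a minimal
mixed-tight set `R`, every `(s,t)`-separator avoiding `r` has out-degree at least `k+1`
and every `(t,s)`-separator avoiding `r` has in-degree at least `k+1`. -/
theorem safe_source_sink_separators
    {V : Type*} [Fintype V] [DecidableEq V] (A : Multiset (Finset V × V)) (k : ℕ) (r : V)
    (hconn : ∀ W : Finset V, W.Nonempty → W ≠ Finset.univ → k ≤ dIn A W)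
    (R S T : Finset V) (s t : V)
    (hR : R ⊆ Finset.univ \ {r})
    (hRin : dIn A R = k)
    (hTR : T ⊆ R)
    (hRmin : ∀ R' : Finset V, R' ⊆ Finset.univ \ {r} → R'.Nonempty → R' ⊆ R →
      ((dIn A R' = k ∧ ∃ T' : Finset V, T' ⊆ R' ∧ T'.Nonempty ∧ dOut A T' = k) ∨
       (dOut A R' = k ∧ ∃ T' : Finset V, T' ⊆ R' ∧ T'.Nonempty ∧ dIn A T' = k)) →
      R' = R)
    (hSR : S ⊆ R) (hdS : dIn A S = k)
    (hSmin : ∀ S' : Finset V, S' ⊆ S → S'.Nonempty → dIn A S' = k → S' = S)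
    (hdT : dOut A T = k)
    (hTmin : ∀ T' : Finset V, T' ⊆ T → T'.Nonempty → dOut A T' = k → T' = T)
    (hsS : s ∈ S)
    (hs_safe_a : ∀ X : Finset V,
      (X = Finset.univ ∨ (X ⊆ Finset.univ \ {r} ∧ dOut A X = k)) → s ∈ X → S ⊂ X)
    (hs_safe_b : ∀ X : Finset V, X ⊆ Finset.univ \ {r} → dOut A X = k + 1 → s ∈ X →
      (S \ X).Nonempty →
      ∃ Y : Finset V, Y ⊆ Finset.univ \ {r} ∧ dOut A Y = k ∧ s ∉ Y ∧ Y ⊂ X)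
    (htT : t ∈ T)
    (ht_safe_a : ∀ X : Finset V,
      (X = Finset.univ ∨ (X ⊆ Finset.univ \ {r} ∧ dIn A X = k)) → t ∈ X → T ⊂ X)
    (ht_safe_b : ∀ X : Finset V, X ⊆ Finset.univ \ {r} → dIn A X = k + 1 → t ∈ X →
      (T \ X).Nonempty →
      ∃ Y : Finset V, Y ⊆ Finset.univ \ {r} ∧ dIn A Y = k ∧ t ∉ Y ∧ Y ⊂ X) :
    (∀ X : Finset V, X ⊆ Finset.univ \ {r} → s ∈ X → t ∉ X → k + 1 ≤ dOut A X) ∧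
    (∀ X : Finset V, X ⊆ Finset.univ \ {r} → t ∈ X → s ∉ X → k + 1 ≤ dIn A X) := by
  have hnr : ∀ W : Finset V, W ⊆ Finset.univ \ {r} → r ∉ W := by
    intro W hW h; simpa using hW h
  have hne_univ : ∀ W : Finset V, r ∉ W → W ≠ Finset.univ := by
    intro W h heq; exact h (heq ▸ Finset.mem_univ r)
  have hrR : r ∉ R := hnr R hR
  constructor
  · intro X hX hsX htX
    by_contra hlt
    push_neg at hlt
    have hrX : r ∉ X := hnr X hX
    -- dOut A X = k
    have hge : k ≤ dOut A X := by
      rw [dOut_eq_dIn_compl]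
      refine hconn _ ⟨r, by simp [hrX]⟩ ?_
      intro h
      have : s ∈ Finset.univ \ X := by rw [h]; exact Finset.mem_univ s
      simp [hsX] at this
    have hOutk : dOut A X = k := le_antisymm (by omega) hge
    by_cases hXR : X ⊆ R
    · -- Case X ⊆ R
      have hXeqR : X = R :=
        hRmin X hX ⟨s, hsX⟩ hXR
          (Or.inr ⟨hOutk, S, (hs_safe_a X (Or.inr ⟨hX, hOutk⟩) hsX).subset, ⟨s, hsS⟩, hdS⟩)
      exact htX (hXeqR ▸ hTR htT)
    · -- Case X \ R nonempty
      obtain ⟨x, hxX, hxR⟩ : ∃ x, x ∈ X ∧ x ∉ R := by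
        rcases Finset.not_subset.1 hXR with ⟨x, hx1, hx2⟩; exact ⟨x, hx1, hx2⟩
      have hC : dIn A (Finset.univ \ X) = k := by rw [← dOut_eq_dIn_compl]; exact hOutk
      have hsub := dIn_submod A R (Finset.univ \ X)
      have hinter : R ∩ (Finset.univ \ X) = R \ X := by
        ext u; simp only [Finset.mem_inter, Finset.mem_sdiff, Finset.mem_univ, true_and]
      have hu1 : k ≤ dIn A (R ∪ (Finset.univ \ X)) := by
        refine hconn _ ⟨r, Finset.mem_union_right _ (by simp [hrX])⟩ ?_
        intro h
        have : x ∈ R ∪ (Finset.univ \ X) := by rw [h]; exact Finset.mem_univ x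
        rcases Finset.mem_union.1 this with h' | h'
        · exact hxR h'
        · simp [hxX] at h'
      have htRX : t ∈ R \ X := Finset.mem_sdiff.2 ⟨hTR htT, htX⟩
      have hu2 : k ≤ dIn A (R \ X) := by
        refine hconn _ ⟨t, htRX⟩ (hne_univ _ ?_)
        intro h; exact hrR (Finset.mem_sdiff.1 h).1
      rw [hinter, hRin, hC] at hsub
      have hRXk : dIn A (R \ X) = k := by omega
      have hRXsub : R \ X ⊆ Finset.univ \ {r} := fun u hu => hR (Finset.mem_sdiff.1 hu).1
      have hTsub : T ⊂ R \ X := ht_safe_a _ (Or.inr ⟨hRXsub, hRXk⟩) htRX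
      have hRXeq : R \ X = R :=
        hRmin _ hRXsub ⟨t, htRX⟩ Finset.sdiff_subset
          (Or.inl ⟨hRXk, T, hTsub.subset, ⟨t, htT⟩, hdT⟩)
      have : s ∈ R \ X := by rw [hRXeq]; exact hSR hsS
      exact (Finset.mem_sdiff.1 this).2 hsX
  · intro X hX htX hsX
    by_contra hlt
    push_neg at hlt
    have hrX : r ∉ X := hnr X hX
    have hInk : dIn A X = k :=
      le_antisymm (by omega) (hconn X ⟨t, htX⟩ (hne_univ X hrX))
    have hTX : T ⊂ X := ht_safe_a X (Or.inr ⟨hX, hInk⟩) htX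
    have hsub := dIn_submod A X R
    have hu1 : k ≤ dIn A (X ∪ R) := by
      refine hconn _ ⟨t, Finset.mem_union_left _ htX⟩ (hne_univ _ ?_)
      intro h
      rcases Finset.mem_union.1 h with h' | h'
      · exact hrX h'
      · exact hrR h'
    have htXR : t ∈ X ∩ R := Finset.mem_inter.2 ⟨htX, hTR htT⟩
    have hu2 : k ≤ dIn A (X ∩ R) := by
      refine hconn _ ⟨t, htXR⟩ (hne_univ _ ?_)
      intro h; exact hrX (Finset.mem_inter.1 h).1
    rw [hInk, hRin] at hsub
    have hXRk : dIn A (X ∩ R) = k := by omega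
    have hXReq : X ∩ R = R :=
      hRmin _ (fun u hu => hR (Finset.mem_inter.1 hu).2) ⟨t, htXR⟩ Finset.inter_subset_right
        (Or.inl ⟨hXRk, T, fun u hu => Finset.mem_inter.2 ⟨hTX.subset hu, hTR hu⟩,
          ⟨t, htT⟩, hdT⟩)
    have : s ∈ X ∩ R := by rw [hXReq]; exact hSR hsS
    exact hsX (Finset.mem_inter.1 this).1
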